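/- Fix γ > 1. Let U = (ρ, m₁, m₂, E) be a 2D Euler state with ρ > 0 and p(U) > 0, set v₁ = m₁/ρ, a = √(γp(U)/ρ), and let α > |v₁|. Then for either sign, the internal energy density of U ± F₁(U)/α is positive if and only if ((γ−1)/(2γ)) a² < (α ± v₁)². -/
import Mathlib


/-- Internal energy density `ρe` of a 2D Euler state `U = (ρ, m₁, m₂, E)`. -/
noncomputable def eulerIntE2D (U : Fin 4 → ℝ) : ℝ :=
  U 3 - (U 1 ^ 2 + U 2 ^ 2) / (2 * U 0)

/-- Pressure of a 2D Euler state with adiabatic index `γ`. -/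
noncomputable def eulerPressure2D (γ : ℝ) (U : Fin 4 → ℝ) : ℝ :=
  (γ - 1) * eulerIntE2D U

/-- Sound speed of a 2D Euler state. -/
noncomputable def eulerSound2D (γ : ℝ) (U : Fin 4 → ℝ) : ℝ :=
  Real.sqrt (γ * eulerPressure2D γ U / U 0)

/-- x-directional flux of the 2D Euler equations. -/
noncomputable def eulerFlux2D (γ : ℝ) (U : Fin 4 → ℝ) : Fin 4 → ℝ :=
  ![U 1, U 1 ^ 2 / U 0 + eulerPressure2D γ U, U 1 * U 2 / U 0,
    (U 3 + eulerPressure2D γ U) * U 1 / U 0]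

set_option maxHeartbeats 1000000 in
theorem euler2D_shifted_internal_energy_pos_iff
    (γ : ℝ) (hγ : 1 < γ) (U : Fin 4 → ℝ) (hρ : 0 < U 0)
    (hp : 0 < eulerPressure2D γ U)
    (v₁ a : ℝ) (hv₁ : v₁ = U 1 / U 0) (ha : a = eulerSound2D γ U)
    (α : ℝ) (hα : |v₁| < α) :
    (0 < eulerIntE2D (U + α⁻¹ • eulerFlux2D γ U) ↔
      (γ - 1) / (2 * γ) * a ^ 2 < (α + v₁) ^ 2) ∧
    (0 < eulerIntE2D (U - α⁻¹ • eulerFlux2D γ U) ↔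
      (γ - 1) / (2 * γ) * a ^ 2 < (α - v₁) ^ 2) := by
  have hα0 : 0 < α := lt_of_le_of_lt (abs_nonneg v₁) hα
  obtain ⟨hv1, hv2⟩ := abs_lt.mp hα
  have hγ0 : 0 < γ := by linarith
  have hρe : 0 < eulerIntE2D U := by
    have := hp; unfold eulerPressure2D at this; nlinarith
  have ha2 : a ^ 2 = γ * eulerPressure2D γ U / U 0 := by
    rw [ha, eulerSound2D, Real.sq_sqrt]
    exact div_nonneg (mul_nonneg hγ0.le hp.le) hρ.le
  have h1 : 0 < α + v₁ := by linarith
  have h2 : 0 < α - v₁ := by linarith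
  have hs1 : 0 < α * U 0 + U 1 := by
    have hU1 : U 1 = v₁ * U 0 := by rw [hv₁]; field_simp
    rw [hU1]; nlinarith
  have hs2 : 0 < α * U 0 - U 1 := by
    have hU1 : U 1 = v₁ * U 0 := by rw [hv₁]; field_simp
    rw [hU1]; nlinarith
  have hfac1 : U 0 + α⁻¹ * U 1 = (α * U 0 + U 1) / α := by field_simp
  have hfac2 : U 0 - α⁻¹ * U 1 = (α * U 0 - U 1) / α := by field_simp
  have key1 : eulerIntE2D (U + α⁻¹ • eulerFlux2D γ U) =
      (U 0 * eulerIntE2D U / (α * (α * U 0 + U 1))) *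
        ((α + v₁) ^ 2 - (γ - 1) / (2 * γ) * a ^ 2) := by
    rw [ha2, hv₁]
    simp only [eulerIntE2D, eulerPressure2D, eulerFlux2D, Pi.add_apply, Pi.smul_apply,
      smul_eq_mul, Matrix.cons_val_zero, Matrix.cons_val_one, Matrix.head_cons,
      Matrix.cons_val_two, Matrix.cons_val_three, Matrix.tail_cons]
    rw [hfac1]
    field_simp [hρ.ne', hα0.ne', hγ0.ne', hs1.ne']
    ring
  have key2 : eulerIntE2D (U - α⁻¹ • eulerFlux2D γ U) =
      (U 0 * eulerIntE2D U / (α * (α * U 0 - U 1))) *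
        ((α - v₁) ^ 2 - (γ - 1) / (2 * γ) * a ^ 2) := by
    rw [ha2, hv₁]
    simp only [eulerIntE2D, eulerPressure2D, eulerFlux2D, Pi.sub_apply, Pi.smul_apply,
      smul_eq_mul, Matrix.cons_val_zero, Matrix.cons_val_one, Matrix.head_cons,
      Matrix.cons_val_two, Matrix.cons_val_three, Matrix.tail_cons]
    rw [hfac2]
    field_simp [hρ.ne', hα0.ne', hγ0.ne', hs2.ne']
    ring
  have hc1 : 0 < U 0 * eulerIntE2D U / (α * (α * U 0 + U 1)) :=
    div_pos (mul_pos hρ hρe) (mul_pos hα0 hs1)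
  have hc2 : 0 < U 0 * eulerIntE2D U / (α * (α * U 0 - U 1)) :=
    div_pos (mul_pos hρ hρe) (mul_pos hα0 hs2)
  constructor
  · rw [key1, mul_pos_iff_of_pos_left hc1, sub_pos]
  · rw [key2, mul_pos_iff_of_pos_left hc2, sub_pos]
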